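/- Let A be a K×K Hermitian positive definite complex matrix, let D be the diagonal matrix with entries D_{kk} = A_{kk} (which are real and positive), and suppose A ⪯ η⁺·D for some real η⁺ > 0. Then for every index k, the sum over k' ≠ k of |A_{kk'}|² / A_{k'k'} is at most ((η⁺)² − 1)·A_{kk}. -/

import Mathlib

open ComplexOrder Matrix

/-- Let `A` be a `K×K` Hermitian positive definite matrix, `D = diag(A_{kk})`, and suppose
`A ⪯ η⁺ D` for some `η⁺ > 0`. Then for every `k`,
`∑_{k' ≠ k} |A_{kk'}|² / A_{k'k'} ≤ ((η⁺)² − 1) A_{kk}`. -/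
theorem stmt_10 {K : ℕ} (A : Matrix (Fin K) (Fin K) ℂ) (hA : A.PosDef)
    (ηp : ℝ) (hηp : 0 < ηp)
    (hle : ((ηp : ℂ) • Matrix.diagonal (fun k => A k k) - A).PosSemidef) :
    ∀ k : Fin K,
      ∑ k' ∈ Finset.univ.erase k, ‖A k k'‖ ^ 2 / (A k' k').re
        ≤ (ηp ^ 2 - 1) * (A k k).re := by
  intro k
  classical
  set d : Fin K → ℝ := fun j => (A j j).re with hddef
  -- Hermitian facts
  have hherm : ∀ i j, A j i = (starRingEnd ℂ) (A i j) := by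
    intro i j
    have := congrFun (congrFun hA.1 j) i
    simpa [Matrix.conjTranspose_apply] using this.symm
  have hdiag : ∀ j, A j j = ((d j : ℝ) : ℂ) := by
    intro j
    have h := hherm j j
    have him : (A j j).im = 0 := by
      have := congrArg Complex.im h
      simp [Complex.conj_im] at this
      linarith
    exact Complex.ext rfl (by simp [him])
  have hdpos : ∀ j, 0 < d j := by
    intro j
    have hne : (Pi.single j 1 : Fin K → ℂ) ≠ 0 := by
      intro h
      have := congrFun h j
      simp at this
    have h := hA.dotProduct_mulVec_pos hne
    have hre := (Complex.lt_def.mp h).1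
    simpa [dotProduct, Matrix.mulVec_single, apply_ite,
      Pi.single_apply, Finset.sum_ite_eq', hddef] using hre
  have hdne : ∀ j, ((d j : ℝ) : ℂ) ≠ 0 := fun j =>
    Complex.ofReal_ne_zero.mpr (hdpos j).ne'
  set S : ℝ := ∑ j ∈ Finset.univ.erase k, ‖A k j‖ ^ 2 / d j with hSdef
  -- the test vectors
  set y : Fin K → ℂ := fun j => if j = k then 0 else (starRingEnd ℂ) (A k j) / ((d j : ℝ) : ℂ)
    with hydef
  set x : Fin K → ℂ := y + (ηp : ℂ) • (Pi.single k 1 : Fin K → ℂ) with hxdef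
  have hyk : y k = 0 := by simp [hydef]
  have hyj : ∀ j, j ≠ k → y j = (starRingEnd ℂ) (A k j) / ((d j : ℝ) : ℂ) := by
    intro j hj; simp [hydef, hj]
  -- claim 1 : (A *ᵥ y) k = S
  have claim1 : (A *ᵥ y) k = ((S : ℝ) : ℂ) := by
    simp only [Matrix.mulVec, dotProduct]
    rw [← Finset.sum_erase_add _ _ (Finset.mem_univ k), hyk, mul_zero, add_zero,
      hSdef, Complex.ofReal_sum]
    refine Finset.sum_congr rfl fun j hj => ?_
    have hjk : j ≠ k := Finset.ne_of_mem_erase hj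
    rw [hyj j hjk, mul_div_assoc' , Complex.mul_conj, ← Complex.sq_norm]
    push_cast
    ring
  -- claim 2 : ∑ i, conj (y i) * A i k = S
  have claim2 : ∑ i, (starRingEnd ℂ) (y i) * A i k = ((S : ℝ) : ℂ) := by
    rw [← Finset.sum_erase_add _ _ (Finset.mem_univ k), hyk, map_zero, zero_mul, add_zero,
      hSdef, Complex.ofReal_sum]
    refine Finset.sum_congr rfl fun j hj => ?_
    have hjk : j ≠ k := Finset.ne_of_mem_erase hj
    rw [hyj j hjk, hherm k j, map_div₀, Complex.conj_conj, Complex.conj_ofReal,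
      div_mul_eq_mul_div, Complex.mul_conj, ← Complex.sq_norm]
    push_cast
    ring
  -- T1 : quadratic form of the diagonal
  have T1 : star x ⬝ᵥ ((Matrix.diagonal fun j => A j j) *ᵥ x)
      = ((ηp ^ 2 * d k + S : ℝ) : ℂ) := by
    have hxk : x k = (ηp : ℂ) := by simp [hxdef, hyk]
    have hxj : ∀ j, j ≠ k → x j = (starRingEnd ℂ) (A k j) / ((d j : ℝ) : ℂ) := by
      intro j hj
      simp [hxdef, hyj j hj, Pi.single_apply, hj]
    simp only [dotProduct, Matrix.mulVec_diagonal, Pi.star_apply, RCLike.star_def]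
    rw [← Finset.sum_erase_add _ _ (Finset.mem_univ k)]
    have hterm : ∀ j ∈ Finset.univ.erase k,
        (starRingEnd ℂ) (x j) * (A j j * x j)
          = ((‖A k j‖ ^ 2 / d j : ℝ) : ℂ) := by
      intro j hj
      have hjk : j ≠ k := Finset.ne_of_mem_erase hj
      rw [hxj j hjk, hdiag j, map_div₀, Complex.conj_conj, Complex.conj_ofReal]
      have hmc : A k j * (starRingEnd ℂ) (A k j) = ((‖A k j‖ : ℝ) : ℂ) ^ 2 := by
        rw [Complex.mul_conj, ← Complex.sq_norm]
        push_cast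
        try ring
      push_cast
      field_simp [hdne j]
      linear_combination hmc
    rw [Finset.sum_congr rfl hterm, hxk, hdiag k]
    simp only [Complex.conj_ofReal]
    push_cast [hSdef]
    ring
  -- Q : nonnegative quadratic form on y
  have hQ := hA.posSemidef.dotProduct_mulVec_nonneg y
  set Q : ℂ := star y ⬝ᵥ (A *ᵥ y) with hQdef
  have hQre : 0 ≤ Q.re := (Complex.le_def.mp hQ).1
  -- T2 : quadratic form of A at x
  have hstarsingle : star ((ηp : ℂ) • (Pi.single k 1 : Fin K → ℂ))
      = (ηp : ℂ) • (Pi.single k 1 : Fin K → ℂ) := by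
    funext j
    by_cases hj : j = k <;> simp [Pi.single_apply, hj, Complex.conj_ofReal]
  have T2 : star x ⬝ᵥ (A *ᵥ x)
      = ((ηp ^ 2 * d k + 2 * ηp * S : ℝ) : ℂ) + Q := by
    rw [hxdef, star_add, Matrix.mulVec_add, add_dotProduct, dotProduct_add,
      dotProduct_add, hstarsingle, smul_dotProduct, smul_dotProduct,
      Matrix.mulVec_smul, dotProduct_smul, dotProduct_smul]
    have h1 : (Pi.single k 1 : Fin K → ℂ) ⬝ᵥ (A *ᵥ y) = ((S : ℝ) : ℂ) := by
      rw [single_dotProduct, one_mul, claim1]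
    have h2 : star y ⬝ᵥ (A *ᵥ Pi.single k 1) = ((S : ℝ) : ℂ) := by
      rw [Matrix.mulVec_single]
      simpa [dotProduct, mul_one] using claim2
    have h3 : (Pi.single k 1 : Fin K → ℂ) ⬝ᵥ (A *ᵥ Pi.single k 1) = ((d k : ℝ) : ℂ) := by
      rw [Matrix.mulVec_single_one, single_dotProduct, one_mul, Matrix.col_apply, hdiag k]
    rw [h1, h2, h3, ← hQdef]
    push_cast [smul_eq_mul]
    ring
  -- the main inequality from hle at x
  have hmain := hle.dotProduct_mulVec_nonneg x
  have hval : star x ⬝ᵥ (((ηp : ℂ) • Matrix.diagonal (fun j => A j j) - A) *ᵥ x)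
      = ((ηp * (ηp ^ 2 * d k + S) - (ηp ^ 2 * d k + 2 * ηp * S) : ℝ) : ℂ) - Q := by
    rw [Matrix.sub_mulVec, dotProduct_sub, Matrix.smul_mulVec,
      dotProduct_smul, T1, T2]
    push_cast [smul_eq_mul]
    ring
  rw [hval] at hmain
  have hmre := (Complex.le_def.mp hmain).1
  simp only [Complex.sub_re, Complex.ofReal_re, Complex.zero_re] at hmre
  -- η ≥ 1
  have hη1 : 1 ≤ ηp := by
    have h := hle.dotProduct_mulVec_nonneg (Pi.single k 1)
    have hre := (Complex.le_def.mp h).1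
    have hval2 : star (Pi.single k 1 : Fin K → ℂ) ⬝ᵥ
        (((ηp : ℂ) • Matrix.diagonal (fun j => A j j) - A) *ᵥ (Pi.single k 1 : Fin K → ℂ))
        = (((ηp - 1) * d k : ℝ) : ℂ) := by
      have hss : star (Pi.single k 1 : Fin K → ℂ) = (Pi.single k 1 : Fin K → ℂ) := by
        funext j; by_cases hj : j = k <;> simp [Pi.single_apply, hj]
      have hd1 : (Pi.single k 1 : Fin K → ℂ) ⬝ᵥ ((Matrix.diagonal fun j => A j j) *ᵥ
          (Pi.single k 1 : Fin K → ℂ)) = A k k := by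
        rw [Matrix.mulVec_single, single_dotProduct]
        simp [Matrix.diagonal_apply_eq]
      have hd2 : (Pi.single k 1 : Fin K → ℂ) ⬝ᵥ (A *ᵥ (Pi.single k 1 : Fin K → ℂ)) = A k k := by
        rw [Matrix.mulVec_single, single_dotProduct]
        simp
      rw [hss, Matrix.sub_mulVec, dotProduct_sub, Matrix.smul_mulVec,
        dotProduct_smul, hd1, hd2, hdiag k]
      push_cast [smul_eq_mul]
      ring
    rw [hval2] at hre
    simp only [Complex.ofReal_re, Complex.zero_re] at hre
    nlinarith [hdpos k]
  -- conclude
  have hSle : ηp * S ≤ ηp ^ 2 * (ηp - 1) * d k := by nlinarith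
  have hgoal : S ≤ (ηp ^ 2 - 1) * d k := by
    nlinarith [hSle, hdpos k, hηp, hη1,
      mul_nonneg (mul_nonneg hηp.le (sub_nonneg.mpr hη1)) (hdpos k).le]
  simpa [hSdef, hddef] using hgoal
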